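/- If G and H are graphs with γ_sR(G) ≥ 0 and γ_sR(H) ≥ 0, then γ_sR(G ∨ H) ≤ γ_sR(G) + γ_sR(H). -/

import Mathlib

open Finset SimpleGraph
open scoped Classical

/-- The sum of `f` over the closed neighborhood of `v` in `G`. -/
noncomputable def closedNbrSum {V : Type*} [Fintype V] (G : SimpleGraph V)
    (f : V → ℤ) (v : V) : ℤ :=
  ∑ u ∈ Finset.univ.filter (fun u => u = v ∨ G.Adj v u), f u

/-- `f` is a signed Roman dominating function on `G`. -/
def IsSRDF {V : Type*} [Fintype V] (G : SimpleGraph V) (f : V → ℤ) : Prop :=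
  (∀ v, f v = -1 ∨ f v = 1 ∨ f v = 2) ∧
  (∀ v, 1 ≤ closedNbrSum G f v) ∧
  (∀ v, f v = -1 → ∃ u, G.Adj v u ∧ f u = 2)

/-- The signed Roman domination number of `G`. -/
noncomputable def gammaSR {V : Type*} [Fintype V] (G : SimpleGraph V) : ℤ :=
  sInf {w : ℤ | ∃ f, IsSRDF G f ∧ w = ∑ v, f v}

/-- The join of two graphs. -/
def graphJoin {V W : Type*} (G : SimpleGraph V) (H : SimpleGraph W) :
    SimpleGraph (V ⊕ W) where
  Adj x y :=
    match x, y with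
    | .inl a, .inl b => G.Adj a b
    | .inr a, .inr b => H.Adj a b
    | _, _ => True
  symm := by
    constructor
    rintro (a | a) (b | b) h <;> simp_all <;> exact h.symm
  loopless := by
    constructor
    rintro (a | a) h <;> simp_all

/-!
The two minimum signed Roman dominating functions of `G` and `H`, placed side by side, form a
signed Roman dominating function of `G ∨ H`: a closed neighbourhood of a vertex of `G` in the join
is its closed neighbourhood in `G` together with all of `H`, so its weight only grows by the
weight `γ_sR(H) ≥ 0` of `H`, and symmetrically.
-/

section SignedRoman

variable {V W : Type*} [Fintype V] [Fintype W]

theorem isSRDF_const_two (G : SimpleGraph V) : IsSRDF G fun _ => 2 := by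
  refine ⟨fun _ => by simp, fun v => ?_, fun _ h => by simp at h⟩
  have hv : v ∈ univ.filter (fun u => u = v ∨ G.Adj v u) := by simp
  calc (1 : ℤ) ≤ 2 := by norm_num
    _ = ∑ u ∈ {v}, (2 : ℤ) := by simp
    _ ≤ closedNbrSum G (fun _ => 2) v :=
      sum_le_sum_of_subset_of_nonneg (singleton_subset_iff.2 hv) fun _ _ _ => by norm_num

theorem IsSRDF.neg_one_le {G : SimpleGraph V} {f : V → ℤ} (hf : IsSRDF G f) (v : V) :
    -1 ≤ f v := by
  rcases hf.1 v with h | h | h <;> omega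

theorem nonempty_srdfWeights (G : SimpleGraph V) :
    {w : ℤ | ∃ f, IsSRDF G f ∧ w = ∑ v, f v}.Nonempty :=
  ⟨_, _, isSRDF_const_two G, rfl⟩

theorem bddBelow_srdfWeights (G : SimpleGraph V) :
    BddBelow {w : ℤ | ∃ f, IsSRDF G f ∧ w = ∑ v, f v} := by
  refine ⟨-(Fintype.card V : ℤ), ?_⟩
  rintro w ⟨f, hf, rfl⟩
  calc -(Fintype.card V : ℤ) = ∑ _v : V, (-1 : ℤ) := by simp
    _ ≤ ∑ v, f v := sum_le_sum fun v _ => hf.neg_one_le v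

theorem exists_isSRDF_sum_eq_gammaSR (G : SimpleGraph V) :
    ∃ f, IsSRDF G f ∧ gammaSR G = ∑ v, f v :=
  Int.csInf_mem (nonempty_srdfWeights G) (bddBelow_srdfWeights G)

theorem gammaSR_le_sum {G : SimpleGraph V} {f : V → ℤ} (hf : IsSRDF G f) :
    gammaSR G ≤ ∑ v, f v :=
  csInf_le (bddBelow_srdfWeights G) ⟨f, hf, rfl⟩

theorem closedNbrSum_graphJoin_inl (G : SimpleGraph V) (H : SimpleGraph W) (f : V → ℤ)
    (g : W → ℤ) (v : V) :
    closedNbrSum (graphJoin G H) (Sum.elim f g) (.inl v) = closedNbrSum G f v + ∑ w, g w := by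
  simp only [closedNbrSum, sum_filter, Fintype.sum_sum_type]
  simp [graphJoin]

theorem closedNbrSum_graphJoin_inr (G : SimpleGraph V) (H : SimpleGraph W) (f : V → ℤ)
    (g : W → ℤ) (w : W) :
    closedNbrSum (graphJoin G H) (Sum.elim f g) (.inr w) = ∑ v, f v + closedNbrSum H g w := by
  simp only [closedNbrSum, sum_filter, Fintype.sum_sum_type]
  simp [graphJoin]

theorem IsSRDF.graphJoin_sumElim {G : SimpleGraph V} {H : SimpleGraph W} {f : V → ℤ}
    {g : W → ℤ} (hf : IsSRDF G f) (hg : IsSRDF H g) (hf₀ : 0 ≤ ∑ v, f v)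
    (hg₀ : 0 ≤ ∑ w, g w) : IsSRDF (graphJoin G H) (Sum.elim f g) := by
  refine ⟨?_, ?_, ?_⟩
  · rintro (v | w)
    exacts [hf.1 v, hg.1 w]
  · rintro (v | w)
    · rw [closedNbrSum_graphJoin_inl]
      linarith [hf.2.1 v]
    · rw [closedNbrSum_graphJoin_inr]
      linarith [hg.2.1 w]
  · rintro (v | w) h
    · obtain ⟨u, hu, hu2⟩ := hf.2.2 v h
      exact ⟨.inl u, hu, hu2⟩
    · obtain ⟨u, hu, hu2⟩ := hg.2.2 w h
      exact ⟨.inr u, hu, hu2⟩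

end SignedRoman

theorem stmt2 {V W : Type*} [Fintype V] [Fintype W]
    (G : SimpleGraph V) (H : SimpleGraph W)
    (hG : 0 ≤ gammaSR G) (hH : 0 ≤ gammaSR H) :
    gammaSR (graphJoin G H) ≤ gammaSR G + gammaSR H := by
  obtain ⟨f, hf, hfG⟩ := exists_isSRDF_sum_eq_gammaSR G
  obtain ⟨g, hg, hgH⟩ := exists_isSRDF_sum_eq_gammaSR H
  calc gammaSR (graphJoin G H) ≤ ∑ x, Sum.elim f g x :=
        gammaSR_le_sum (hf.graphJoin_sumElim hg (hfG ▸ hG) (hgH ▸ hH))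
    _ = gammaSR G + gammaSR H := by rw [Fintype.sum_sum_type, hfG, hgH]; rfl
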